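/- Let n ≥ 2, m ≥ 1, d ≥ 1, and let A ∈ GL_m(ℤ/nℤ) have order d and satisfy Φ_d(A) = 0 in Mat_m(ℤ/nℤ). For 0 ≤ k ≤ d−1, write x^k ≡ ∑_{j=0}^{φ(d)−1} c_{jk} x^j (mod Φ_d(x)) with c_{jk} ∈ ℤ. Then for every v ∈ (ℤ/nℤ)^m, the supercharacter value θ(v) = ∑_{k=0}^{d−1} exp(2πi (A^k 𝟏 · v)/n) equals ∑_{k=0}^{d−1} ∏_{j=0}^{φ(d)−1} exp(2πi (A^j 𝟏 · v)/n)^{c_{jk}}. In particular θ(v) lies in the image of the Laurent polynomial g_d : 𝕋^{φ(d)} → ℂ, g_d(z_1,…,z_{φ(d)}) = ∑_{k=0}^{d−1} ∏_{j=0}^{φ(d)−1} z_{j+1}^{c_{jk}}. -/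

import Mathlib

/-!
Each summand `exp (2πi x / n)` is `ψ x` for the standard additive character
`ψ = ZMod.toCircle` of `ℤ/nℤ`. Since `Φ_d(A) = 0`, reducing `X^k` modulo `Φ_d` gives
`A^k = ∑_j c_{jk} A^j`, so `A^k 𝟏 · v` is the same `ℤ`-combination of the `A^j 𝟏 · v`,
and the character turns that combination into the product of powers `∏_j ψ(A^j 𝟏 · v)^{c_{jk}}`.
-/

open Finset Matrix Polynomial

theorem Polynomial.aeval_pow_eq_sum_of_pow_modByMonic {R S : Type*} [CommRing R] [Ring S]
    [Algebra R S] {p : R[X]} {a : S} (ha : aeval a p = 0) {k N : ℕ} {c : ℕ → R}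
    (h : X ^ k %ₘ p = ∑ j ∈ range N, C (c j) * X ^ j) :
    a ^ k = ∑ j ∈ range N, c j • a ^ j := by
  have := aeval_modByMonic_eq_self_of_root (p := X ^ k) ha
  rw [h] at this
  simpa [map_sum, Algebra.smul_def] using this.symm

theorem Matrix.pow_mulVec_dotProduct_eq_sum_of_pow_modByMonic {R S ι : Type*} [CommRing R]
    [CommRing S] [Algebra R S] [Fintype ι] [DecidableEq ι] {p : R[X]} {M : Matrix ι ι S}
    (hM : aeval M p = 0) {k N : ℕ} {c : ℕ → R}
    (h : X ^ k %ₘ p = ∑ j ∈ range N, C (c j) * X ^ j) (u v : ι → S) :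
    (M ^ k *ᵥ u) ⬝ᵥ v = ∑ j ∈ range N, c j • ((M ^ j *ᵥ u) ⬝ᵥ v) := by
  simp [aeval_pow_eq_sum_of_pow_modByMonic hM h, sum_mulVec, sum_dotProduct, smul_mulVec,
    smul_dotProduct]

theorem AddChar.map_sum_zsmul {A M ι : Type*} [AddCommGroup A] [CommGroup M]
    (ψ : AddChar A M) (s : Finset ι) (c : ι → ℤ) (a : ι → A) :
    ψ (∑ j ∈ s, c j • a j) = ∏ j ∈ s, ψ (a j) ^ c j := by
  induction s using Finset.cons_induction with
  | empty => simp
  | cons i s hi ih => rw [sum_cons, prod_cons, map_add_eq_mul, map_zsmul_eq_zpow, ih]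

theorem generalized_DGL_containment_general (n m d : ℕ) (hn : 2 ≤ n)
    (A : GL (Fin m) (ZMod n))
    (hΦ : aeval (A : Matrix (Fin m) (Fin m) (ZMod n)) (cyclotomic d ℤ) = 0)
    (c : ℕ → ℕ → ℤ)
    (hc : ∀ k < d, (X ^ k : Polynomial ℤ) %ₘ cyclotomic d ℤ =
      ∑ j ∈ Finset.range (Nat.totient d), C (c j k) * X ^ j)
    (v : Fin m → ZMod n) :
    (∑ k ∈ Finset.range d,
        Complex.exp (2 * Real.pi * Complex.I *
          ((((((A : Matrix (Fin m) (Fin m) (ZMod n)) ^ k) *ᵥ fun _ => 1) ⬝ᵥ v).val : ℂ)) / n) =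
      ∑ k ∈ Finset.range d, ∏ j ∈ Finset.range (Nat.totient d),
        (Complex.exp (2 * Real.pi * Complex.I *
          ((((((A : Matrix (Fin m) (Fin m) (ZMod n)) ^ j) *ᵥ fun _ => 1) ⬝ᵥ v).val : ℂ)) / n)) ^ (c j k)) ∧
    ∃ z : Fin (Nat.totient d) → ℂ, (∀ j, ‖z j‖ = 1) ∧
      (∑ k ∈ Finset.range d,
          Complex.exp (2 * Real.pi * Complex.I *
            ((((((A : Matrix (Fin m) (Fin m) (ZMod n)) ^ k) *ᵥ fun _ => 1) ⬝ᵥ v).val : ℂ)) / n) =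
        ∑ k ∈ Finset.range d, ∏ j : Fin (Nat.totient d), (z j) ^ (c (j : ℕ) k)) := by
  have : NeZero n := ⟨by omega⟩
  set w : ℕ → ZMod n := fun k => ((A : Matrix (Fin m) (Fin m) (ZMod n)) ^ k *ᵥ fun _ => 1) ⬝ᵥ v
  simp only [← ZMod.toCircle_apply]
  have orbit : ∀ k < d, (ZMod.toCircle (w k) : ℂ) =
      ∏ j ∈ range (Nat.totient d), (ZMod.toCircle (w j) : ℂ) ^ c j k := fun k hk => by
    rw [show w k = _ from pow_mulVec_dotProduct_eq_sum_of_pow_modByMonic hΦ (hc k hk) _ v,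
      AddChar.map_sum_zsmul]
    exact map_prod Circle.coeHom _ _
  have hθ := sum_congr rfl fun k hk => orbit k (mem_range.1 hk)
  refine ⟨hθ, fun j => ZMod.toCircle (w j), fun j => Circle.norm_coe _, ?_⟩
  rw [hθ]
  exact sum_congr rfl fun k _ => (Fin.prod_univ_eq_prod_range (fun j => _ ^ c j k) _).symm

/-- Generalized Duke–Garcia–Lutz containment: if `A ∈ GL_m(ℤ/nℤ)` has order `d` and
`Φ_d(A) = 0`, then each supercharacter value `θ(v) = ∑_{k<d} exp(2πi (A^k 𝟏 · v)/n)`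
equals `∑_{k<d} ∏_{j<φ(d)} exp(2πi (A^j 𝟏 · v)/n)^{c_{jk}}`, where
`x^k ≡ ∑_j c_{jk} x^j (mod Φ_d)`; in particular `θ(v)` lies in the image of the
Laurent polynomial `g_d` on the `φ(d)`-torus. -/
theorem generalized_DGL_containment (n m d : ℕ) (hn : 2 ≤ n) (hm : 1 ≤ m) (hd : 1 ≤ d)
    (A : GL (Fin m) (ZMod n)) (hA : orderOf A = d)
    (hΦ : aeval (A : Matrix (Fin m) (Fin m) (ZMod n)) (cyclotomic d ℤ) = 0)
    (c : ℕ → ℕ → ℤ)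
    (hc : ∀ k < d, (X ^ k : Polynomial ℤ) %ₘ cyclotomic d ℤ =
      ∑ j ∈ Finset.range (Nat.totient d), C (c j k) * X ^ j)
    (v : Fin m → ZMod n) :
    (∑ k ∈ Finset.range d,
        Complex.exp (2 * Real.pi * Complex.I *
          ((((((A : Matrix (Fin m) (Fin m) (ZMod n)) ^ k) *ᵥ fun _ => 1) ⬝ᵥ v).val : ℂ)) / n) =
      ∑ k ∈ Finset.range d, ∏ j ∈ Finset.range (Nat.totient d),
        (Complex.exp (2 * Real.pi * Complex.I *
          ((((((A : Matrix (Fin m) (Fin m) (ZMod n)) ^ j) *ᵥ fun _ => 1) ⬝ᵥ v).val : ℂ)) / n)) ^ (c j k)) ∧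
    ∃ z : Fin (Nat.totient d) → ℂ, (∀ j, ‖z j‖ = 1) ∧
      (∑ k ∈ Finset.range d,
          Complex.exp (2 * Real.pi * Complex.I *
            ((((((A : Matrix (Fin m) (Fin m) (ZMod n)) ^ k) *ᵥ fun _ => 1) ⬝ᵥ v).val : ℂ)) / n) =
        ∑ k ∈ Finset.range d, ∏ j : Fin (Nat.totient d), (z j) ^ (c (j : ℕ) k)) :=
  generalized_DGL_containment_general n m d hn A hΦ c hc v
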